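/- For integers m, n ≥ 1 with m + n ≥ 3, the star product K_n ⋆ K_m (the graph obtained by gluing K_n and K_m at a single shared vertex) satisfies QEC(K_n ⋆ K_m) = -1/(1 + √((1 - 1/m)(1 - 1/n))). -/

import Mathlib

/-- Distance matrix of K_n ⋆ K_m, the star product of the complete graphs K_n
(on indices 0,…,n-1) and K_m (on indices n-1,…,n+m-2), glued at index n-1:
distance 1 within each clique, distance 2 across. -/
def starDist (n m : ℕ) (i j : Fin (n + m - 1)) : ℝ :=
  if i = j then 0
  else if (i.val < n ∧ j.val < n) ∨ (n - 1 ≤ i.val ∧ n - 1 ≤ j.val) then 1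
  else 2

lemma starDist_eq (n m : ℕ) (hn : 1 ≤ n) (i j : Fin (n + m - 1)) :
    starDist n m i j = 1 - (if i = j then (1:ℝ) else 0)
      + (if (i:ℕ)+1 < n then (1:ℝ) else 0) * (if n ≤ (j:ℕ) then (1:ℝ) else 0)
      + (if n ≤ (i:ℕ) then (1:ℝ) else 0) * (if (j:ℕ)+1 < n then (1:ℝ) else 0) := by
  unfold starDist
  simp only [Fin.ext_iff]
  split_ifs <;> first | (exfalso; omega) | norm_num

lemma quad_eq (n m : ℕ) (hn : 1 ≤ n) (f : Fin (n + m - 1) → ℝ) :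
    ∑ i, ∑ j, starDist n m i j * f i * f j
      = (∑ i, f i)^2 - (∑ i, f i ^ 2)
        + 2 * (∑ i ∈ Finset.univ.filter (fun i : Fin (n+m-1) => (i:ℕ)+1 < n), f i)
            * (∑ i ∈ Finset.univ.filter (fun i : Fin (n+m-1) => n ≤ (i:ℕ)), f i) := by
  have key : ∀ i j : Fin (n+m-1), starDist n m i j * f i * f j
      = f i * f j - (if i = j then f i * f j else 0)
        + (if (i:ℕ)+1 < n then f i else 0) * (if n ≤ (j:ℕ) then f j else 0)
        + (if n ≤ (i:ℕ) then f i else 0) * (if (j:ℕ)+1 < n then f j else 0) := by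
    intro i j
    rw [starDist_eq n m hn]
    split_ifs <;> ring
  calc ∑ i, ∑ j, starDist n m i j * f i * f j
      = ∑ i, ∑ j, (f i * f j - (if i = j then f i * f j else 0)
        + (if (i:ℕ)+1 < n then f i else 0) * (if n ≤ (j:ℕ) then f j else 0)
        + (if n ≤ (i:ℕ) then f i else 0) * (if (j:ℕ)+1 < n then f j else 0)) := by
        exact Finset.sum_congr rfl fun i _ => Finset.sum_congr rfl fun j _ => key i j
    _ = (∑ i, f i)^2 - (∑ i, f i ^ 2)
        + 2 * (∑ i ∈ Finset.univ.filter (fun i : Fin (n+m-1) => (i:ℕ)+1 < n), f i)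
            * (∑ i ∈ Finset.univ.filter (fun i : Fin (n+m-1) => n ≤ (i:ℕ)), f i) := by
        simp only [Finset.sum_add_distrib, Finset.sum_sub_distrib, ← Finset.sum_mul,
          ← Finset.mul_sum, Finset.sum_ite_eq, Finset.mem_univ, if_true,
          ← Finset.sum_filter, pow_two]
        ring

lemma sum_split (n m : ℕ) (hn : 1 ≤ n) (hm : 1 ≤ m) (g : Fin (n+m-1) → ℝ) :
    ∑ i, g i = (∑ i ∈ Finset.univ.filter (fun i : Fin (n+m-1) => (i:ℕ)+1 < n), g i)
      + g ⟨n-1, by omega⟩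
      + (∑ i ∈ Finset.univ.filter (fun i : Fin (n+m-1) => n ≤ (i:ℕ)), g i) := by
  rw [← Finset.sum_filter_add_sum_filter_not Finset.univ
    (fun i : Fin (n+m-1) => (i:ℕ)+1 < n) g]
  have h2 : (Finset.univ.filter (fun i : Fin (n+m-1) => ¬((i:ℕ)+1 < n)))
      = insert (⟨n-1, by omega⟩ : Fin (n+m-1))
          (Finset.univ.filter (fun i : Fin (n+m-1) => n ≤ (i:ℕ))) := by
    ext i
    simp only [Finset.mem_filter, Finset.mem_univ, true_and, Finset.mem_insert, Fin.ext_iff]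
    have := i.isLt
    omega
  rw [h2, Finset.sum_insert (by
    simp only [Finset.mem_filter, Finset.mem_univ, true_and]
    omega)]
  ring

lemma card_AA (n m : ℕ) (hn : 1 ≤ n) (hm : 1 ≤ m) :
    (Finset.univ.filter (fun i : Fin (n+m-1) => (i:ℕ)+1 < n)).card = n - 1 := by
  have h : (Finset.univ.filter (fun i : Fin (n+m-1) => (i:ℕ)+1 < n))
      = Finset.Iio (⟨n-1, by omega⟩ : Fin (n+m-1)) := by
    ext i
    simp only [Finset.mem_filter, Finset.mem_univ, true_and, Finset.mem_Iio, Fin.lt_def]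
    omega
  rw [h, Fin.card_Iio]

lemma card_BB (n m : ℕ) (hn : 1 ≤ n) (hm : 2 ≤ m) :
    (Finset.univ.filter (fun i : Fin (n+m-1) => n ≤ (i:ℕ))).card = m - 1 := by
  have h : (Finset.univ.filter (fun i : Fin (n+m-1) => n ≤ (i:ℕ)))
      = Finset.Ici (⟨n, by omega⟩ : Fin (n+m-1)) := by
    ext i
    simp only [Finset.mem_filter, Finset.mem_univ, true_and, Finset.mem_Ici, Fin.le_def]
  rw [h, Fin.card_Ici]
  simp
  omega

/-- the key scalar inequality -/
lemma bound_aux (α β a b t u w : ℝ) (hα : 1 ≤ α) (hβ : 1 ≤ β) (ht0 : 0 ≤ t)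
    (hu : u^2 = β*(1+α)) (hw : w^2 = α*(1+β)) (huw : u*w = t*((1+α)*(1+β)))
    (ht2 : t^2*((1+α)*(1+β)) = α*β)
    (h1 : a^2/α + (a+b)^2 + b^2/β ≤ 1) :
    2*(a*b)*(1+t) ≤ t := by
  have hα0 : 0 < α := by linarith
  have hβ0 : 0 < β := by linarith
  have hpoly : β*a^2 + α*β*(a+b)^2 + α*b^2 ≤ α*β := by
    have h2 : α*β*(a^2/α + (a+b)^2 + b^2/β) = β*a^2 + α*β*(a+b)^2 + α*b^2 := by
      field_simp
    have h3 := mul_le_mul_of_nonneg_left h1 (mul_pos hα0 hβ0).le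
    rw [h2] at h3
    linarith
  have hkey : 0 ≤ t*(β*(1+α))*a^2 + t*(α*(1+β))*b^2 - 2*(α*β)*(a*b) := by
    have h3 : t*(β*(1+α))*a^2 + t*(α*(1+β))*b^2 - 2*(α*β)*(a*b) = t*(u*a - w*b)^2 := by
      linear_combination (-t*a^2)*hu + (-t*b^2)*hw + (2*a*b)*ht2 + (2*t*a*b)*huw
    rw [h3]
    positivity
  have h4 : 0 ≤ (t - 2*(a*b)*(1+t)) * (α*β) := by
    have h5 := mul_le_mul_of_nonneg_left hpoly ht0
    nlinarith [hkey, h5]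
  have h6 := (mul_nonneg_iff_of_pos_right (mul_pos hα0 hβ0)).mp h4
  linarith

/-- membership in the degenerate case: a two-point function. -/
lemma degenerate_mem (n m : ℕ) (hn : 1 ≤ n) (hN : 2 ≤ n + m - 1)
    (hdeg : n = 1 ∨ m = 1) :
    ∃ f : Fin (n + m - 1) → ℝ,
      (∑ i, f i ^ 2) = 1 ∧ (∑ i, f i) = 0 ∧
      (-1 : ℝ) = ∑ i, ∑ j, starDist n m i j * f i * f j := by
  set d : ℝ := Real.sqrt (1/2) with hd
  have hd2 : d^2 = 1/2 := Real.sq_sqrt (by norm_num)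
  set i0 : Fin (n+m-1) := ⟨0, by omega⟩ with hi0
  set i1 : Fin (n+m-1) := ⟨1, by omega⟩ with hi1
  set f : Fin (n+m-1) → ℝ := fun i => if i = i0 then d else if i = i1 then -d else 0 with hfdef
  have h01 : i0 ≠ i1 := by simp [hi0, hi1, Fin.ext_iff]
  have h10 : i1 ≠ i0 := h01.symm
  have hsq : (∑ i, f i ^ 2) = 1 := by
    have hf : ∀ i : Fin (n+m-1), f i ^ 2
        = d^2 * (if i = i0 then 1 else 0) + d^2 * (if i = i1 then 1 else 0) := by
      intro i
      by_cases h0 : i = i0 <;> by_cases h1 : i = i1 <;> simp_all <;> ring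
    rw [Finset.sum_congr rfl fun i _ => hf i]
    simp [Finset.sum_add_distrib, ← Finset.mul_sum, Finset.sum_ite_eq', hd2]
    norm_num
  have hsum : (∑ i, f i) = 0 := by
    have hf : ∀ i : Fin (n+m-1), f i
        = d * (if i = i0 then 1 else 0) - d * (if i = i1 then 1 else 0) := by
      intro i
      by_cases h0 : i = i0 <;> by_cases h1 : i = i1 <;> simp_all
    rw [Finset.sum_congr rfl fun i _ => hf i]
    simp [Finset.sum_sub_distrib, ← Finset.mul_sum, Finset.sum_ite_eq']
  refine ⟨f, hsq, hsum, ?_⟩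
  rw [quad_eq n m hn, hsum, hsq]
  have hAB : (∑ i ∈ Finset.univ.filter (fun i : Fin (n+m-1) => (i:ℕ)+1 < n), f i)
      * (∑ i ∈ Finset.univ.filter (fun i : Fin (n+m-1) => n ≤ (i:ℕ)), f i) = 0 := by
    rcases hdeg with h1 | h1
    · have he : (Finset.univ.filter (fun i : Fin (n+m-1) => (i:ℕ)+1 < n)) = ∅ := by
        ext i; simp; omega
      rw [he]; simp
    · have he : (Finset.univ.filter (fun i : Fin (n+m-1) => n ≤ (i:ℕ))) = ∅ := by
        ext i; simp only [Finset.mem_filter, Finset.mem_univ, true_and,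
          Finset.notMem_empty, iff_false]
        have := i.isLt; omega
      rw [he]; simp
  rw [mul_assoc, hAB]
  ring

/-- QEC(K_n ⋆ K_m) = -1/(1 + √((1-1/m)(1-1/n))) for m, n ≥ 1 with m + n ≥ 3. -/
theorem qec_star_product_complete (m n : ℕ) (hm : 1 ≤ m) (hn : 1 ≤ n) (h : 3 ≤ m + n) :
    IsGreatest {x : ℝ | ∃ f : Fin (n + m - 1) → ℝ,
      (∑ i, f i ^ 2) = 1 ∧ (∑ i, f i) = 0 ∧
      x = ∑ i, ∑ j, starDist n m i j * f i * f j}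
      (-1 / (1 + Real.sqrt ((1 - 1/(m : ℝ)) * (1 - 1/(n : ℝ))))) := by
  have hN : 2 ≤ n + m - 1 := by omega
  have hm0 : (0:ℝ) < m := by exact_mod_cast hm
  have hn0 : (0:ℝ) < n := by exact_mod_cast hn
  have hrad : 0 ≤ (1 - 1/(m:ℝ)) * (1 - 1/(n:ℝ)) := by
    have h1 : (1:ℝ)/m ≤ 1 := by rw [div_le_one hm0]; exact_mod_cast hm
    have h2 : (1:ℝ)/n ≤ 1 := by rw [div_le_one hn0]; exact_mod_cast hn
    nlinarith
  set t := Real.sqrt ((1 - 1/(m:ℝ)) * (1 - 1/(n:ℝ))) with htdef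
  have ht0 : 0 ≤ t := Real.sqrt_nonneg _
  have ht2' : t^2 = (1 - 1/(m:ℝ)) * (1 - 1/(n:ℝ)) := Real.sq_sqrt hrad
  constructor
  · -- membership
    by_cases hn1 : n = 1
    · have ht : t = 0 := by
        rw [htdef, hn1]; norm_num
      obtain ⟨f, h1, h2, h3⟩ := degenerate_mem n m hn hN (Or.inl hn1)
      exact ⟨f, h1, h2, by rw [← h3, ht]; norm_num⟩
    · by_cases hm1 : m = 1
      · have ht : t = 0 := by
          rw [htdef, hm1]; norm_num
        obtain ⟨f, h1, h2, h3⟩ := degenerate_mem n m hn hN (Or.inr hm1)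
        exact ⟨f, h1, h2, by rw [← h3, ht]; norm_num⟩
      · -- general case : n, m ≥ 2
        have hn2 : 2 ≤ n := by omega
        have hm2 : 2 ≤ m := by omega
        set α : ℝ := (n:ℝ) - 1 with hαdef
        set β : ℝ := (m:ℝ) - 1 with hβdef
        have hα : 1 ≤ α := by
          have : (2:ℝ) ≤ n := by exact_mod_cast hn2
          simp [hαdef]; linarith
        have hβ : 1 ≤ β := by
          have : (2:ℝ) ≤ m := by exact_mod_cast hm2
          simp [hβdef]; linarith
        have hα0 : (0:ℝ) < α := by linarith
        have hβ0 : (0:ℝ) < β := by linarith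
        have h1α : 1 + α = (n:ℝ) := by simp [hαdef]
        have h1β : 1 + β = (m:ℝ) := by simp [hβdef]
        have ht2 : t^2*((1+α)*(1+β)) = α*β := by
          rw [ht2', h1α, h1β]
          field_simp
          ring
        set u : ℝ := Real.sqrt (β*(1+α)) with hudef
        set w : ℝ := Real.sqrt (α*(1+β)) with hwdef
        have hu : u^2 = β*(1+α) := Real.sq_sqrt (by positivity)
        have hw : w^2 = α*(1+β) := Real.sq_sqrt (by positivity)
        have hu0 : 0 ≤ u := Real.sqrt_nonneg _
        have hw0 : 0 ≤ w := Real.sqrt_nonneg _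
        have huw : u*w = t*((1+α)*(1+β)) := by
          have hsq : (u*w)^2 = (t*((1+α)*(1+β)))^2 := by
            linear_combination (w^2)*hu + (β*(1+α))*hw - ((1+α)*(1+β))*ht2
          exact (sq_eq_sq₀ (by positivity) (by positivity)).mp hsq
        set P : ℝ := (1+α)*(1+β) with hPdef
        have hP0 : 0 < P := by positivity
        set S : ℝ := 2*P + 2*(u*w) with hSdef
        have hS0 : 0 < S := by positivity
        set k : ℝ := 1 / Real.sqrt S with hkdef
        have hk2 : k^2 = 1/S := by
          rw [hkdef, div_pow, one_pow, Real.sq_sqrt hS0.le]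
        set p : ℝ := w*k/α with hpdef
        set q : ℝ := u*k/β with hqdef
        set c : ℝ := -(w+u)*k with hcdef
        set f : Fin (n+m-1) → ℝ := fun i =>
          if (i:ℕ)+1 < n then p else if n ≤ (i:ℕ) then q else c with hfdef
        have hcardA : ((Finset.univ.filter (fun i : Fin (n+m-1) => (i:ℕ)+1 < n)).card : ℝ)
            = α := by
          rw [card_AA n m hn hm, hαdef]
          push_cast [Nat.cast_sub hn]
          ring
        have hcardB : ((Finset.univ.filter (fun i : Fin (n+m-1) => n ≤ (i:ℕ))).card : ℝ)
            = β := by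
          rw [card_BB n m hn hm2, hβdef]
          push_cast [Nat.cast_sub hm]
          ring
        have hA : (∑ i ∈ Finset.univ.filter (fun i : Fin (n+m-1) => (i:ℕ)+1 < n), f i)
            = α * p := by
          rw [Finset.sum_congr rfl (fun i hi => by
            simp only [Finset.mem_filter] at hi
            simp [hfdef, hi.2] : ∀ i ∈ _, f i = p)]
          rw [Finset.sum_const, nsmul_eq_mul, hcardA]
        have hB : (∑ i ∈ Finset.univ.filter (fun i : Fin (n+m-1) => n ≤ (i:ℕ)), f i)
            = β * q := by
          rw [Finset.sum_congr rfl (fun i hi => by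
            simp only [Finset.mem_filter] at hi
            have h1 : ¬((i:ℕ)+1 < n) := by omega
            simp [hfdef, h1, hi.2] : ∀ i ∈ _, f i = q)]
          rw [Finset.sum_const, nsmul_eq_mul, hcardB]
        have hA2 : (∑ i ∈ Finset.univ.filter (fun i : Fin (n+m-1) => (i:ℕ)+1 < n), f i ^ 2)
            = α * p^2 := by
          rw [Finset.sum_congr rfl (fun i hi => by
            simp only [Finset.mem_filter] at hi
            simp [hfdef, hi.2] : ∀ i ∈ _, f i ^ 2 = p ^ 2)]
          rw [Finset.sum_const, nsmul_eq_mul, hcardA]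
        have hB2 : (∑ i ∈ Finset.univ.filter (fun i : Fin (n+m-1) => n ≤ (i:ℕ)), f i ^ 2)
            = β * q^2 := by
          rw [Finset.sum_congr rfl (fun i hi => by
            simp only [Finset.mem_filter] at hi
            have h1 : ¬((i:ℕ)+1 < n) := by omega
            simp [hfdef, h1, hi.2] : ∀ i ∈ _, f i ^ 2 = q ^ 2)]
          rw [Finset.sum_const, nsmul_eq_mul, hcardB]
        have hmid : f ⟨n-1, by omega⟩ = c := by
          have h1 : ¬((n-1 : ℕ)+1 < n) := by omega
          have h2 : ¬(n ≤ (n-1:ℕ)) := by omega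
          simp only [hfdef]
          rw [if_neg (by simpa using h1), if_neg (by simpa using h2)]
        have hαp : α * p = w * k := by rw [hpdef]; field_simp
        have hβq : β * q = u * k := by rw [hqdef]; field_simp
        have hsum : (∑ i, f i) = 0 := by
          rw [sum_split n m hn hm f, hA, hB, hmid, hαp, hβq, hcdef]
          ring
        have hαp2 : α * p^2 = (1+β) * k^2 := by
          rw [hpdef, div_pow, mul_pow, hw, mul_div_assoc', div_eq_iff (by positivity)]
          ring
        have hβq2 : β * q^2 = (1+α) * k^2 := by
          rw [hqdef, div_pow, mul_pow, hu, mul_div_assoc', div_eq_iff (by positivity)]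
          ring
        have hsq : (∑ i, f i ^ 2) = 1 := by
          rw [sum_split n m hn hm (fun i => f i ^ 2), hA2, hB2, hmid, hαp2, hβq2, hcdef]
          have expand : (1+β)*k^2 + (-(w+u)*k)^2 + (1+α)*k^2 = S * k^2 := by
            rw [hSdef, hPdef]
            linear_combination (k^2)*hu + (k^2)*hw
          rw [expand, hk2]
          field_simp
        refine ⟨f, hsq, hsum, ?_⟩
        rw [quad_eq n m hn f, hsum, hsq, hA, hB, hαp, hβq]
        have hval : (0:ℝ)^2 - 1 + 2 * (w*k) * (u*k) = -1/(1+t) := by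
          have h1t : (0:ℝ) < 1 + t := by linarith
          have hSt : S = 2*P*(1+t) := by
            rw [hSdef]
            linear_combination 2*huw
          have : 2 * (w*k) * (u*k) = 2*(u*w)*k^2 := by ring
          rw [this, hk2, huw, hSt]
          rw [hPdef] at hP0 ⊢
          field_simp
          ring
        rw [hval]
  · -- upper bound
    rintro x ⟨f, h1, h2, rfl⟩
    rw [quad_eq n m hn f, h2]
    by_cases hn1 : n = 1
    · have ht : t = 0 := by rw [htdef, hn1]; norm_num
      have hAe : (Finset.univ.filter (fun i : Fin (n+m-1) => (i:ℕ)+1 < n)) = ∅ := by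
        ext i; simp; omega
      rw [hAe, ht]
      simp [h1]
    · by_cases hm1 : m = 1
      · have ht : t = 0 := by rw [htdef, hm1]; norm_num
        have hBe : (Finset.univ.filter (fun i : Fin (n+m-1) => n ≤ (i:ℕ))) = ∅ := by
          ext i
          simp only [Finset.mem_filter, Finset.mem_univ, true_and,
            Finset.notMem_empty, iff_false]
          have := i.isLt; omega
        rw [hBe, ht]
        simp [h1]
      · have hn2 : 2 ≤ n := by omega
        have hm2 : 2 ≤ m := by omega
        set α : ℝ := (n:ℝ) - 1 with hαdef
        set β : ℝ := (m:ℝ) - 1 with hβdef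
        have hα : 1 ≤ α := by
          have : (2:ℝ) ≤ n := by exact_mod_cast hn2
          simp [hαdef]; linarith
        have hβ : 1 ≤ β := by
          have : (2:ℝ) ≤ m := by exact_mod_cast hm2
          simp [hβdef]; linarith
        have hα0 : (0:ℝ) < α := by linarith
        have hβ0 : (0:ℝ) < β := by linarith
        have h1α : 1 + α = (n:ℝ) := by simp [hαdef]
        have h1β : 1 + β = (m:ℝ) := by simp [hβdef]
        have ht2 : t^2*((1+α)*(1+β)) = α*β := by
          rw [ht2', h1α, h1β]
          field_simp
          ring
        set u : ℝ := Real.sqrt (β*(1+α)) with hudef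
        set w : ℝ := Real.sqrt (α*(1+β)) with hwdef
        have hu : u^2 = β*(1+α) := Real.sq_sqrt (by positivity)
        have hw : w^2 = α*(1+β) := Real.sq_sqrt (by positivity)
        have huw : u*w = t*((1+α)*(1+β)) := by
          have hsq : (u*w)^2 = (t*((1+α)*(1+β)))^2 := by
            linear_combination (w^2)*hu + (β*(1+α))*hw - ((1+α)*(1+β))*ht2
          exact (sq_eq_sq₀ (by positivity) (by positivity)).mp hsq
        set A := Finset.univ.filter (fun i : Fin (n+m-1) => (i:ℕ)+1 < n) with hAdef
        set B := Finset.univ.filter (fun i : Fin (n+m-1) => n ≤ (i:ℕ)) with hBdef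
        set a := ∑ i ∈ A, f i with hadef
        set b := ∑ i ∈ B, f i with hbdef
        have hcardA : ((A.card) : ℝ) = α := by
          rw [hAdef, card_AA n m hn hm, hαdef]
          push_cast [Nat.cast_sub hn]
          ring
        have hcardB : ((B.card) : ℝ) = β := by
          rw [hBdef, card_BB n m hn hm2, hβdef]
          push_cast [Nat.cast_sub hm]
          ring
        have hCSa : a^2 ≤ α * (∑ i ∈ A, f i ^ 2) := by
          have := sq_sum_le_card_mul_sum_sq (s := A) (f := f)
          rwa [hcardA] at this
        have hCSb : b^2 ≤ β * (∑ i ∈ B, f i ^ 2) := by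
          have := sq_sum_le_card_mul_sum_sq (s := B) (f := f)
          rwa [hcardB] at this
        have hsplit2 := sum_split n m hn hm (fun i => f i ^ 2)
        have hsplit1 := sum_split n m hn hm f
        rw [h1] at hsplit2
        rw [h2] at hsplit1
        set cmid := f ⟨n-1, by omega⟩ with hcmid
        have hc : cmid = -(a+b) := by
          simp only [← hAdef, ← hBdef, ← hadef, ← hbdef, ← hcmid] at hsplit1
          linarith
        have hcons : a^2/α + (a+b)^2 + b^2/β ≤ 1 := by
          simp only [← hAdef, ← hBdef, ← hcmid] at hsplit2
          have e1 : a^2/α ≤ ∑ i ∈ A, f i ^ 2 := by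
            rw [div_le_iff₀ hα0]
            calc a^2 ≤ α * (∑ i ∈ A, f i ^ 2) := hCSa
              _ = (∑ i ∈ A, f i ^ 2) * α := by ring
          have e2 : b^2/β ≤ ∑ i ∈ B, f i ^ 2 := by
            rw [div_le_iff₀ hβ0]
            calc b^2 ≤ β * (∑ i ∈ B, f i ^ 2) := hCSb
              _ = (∑ i ∈ B, f i ^ 2) * β := by ring
          have e3 : (a+b)^2 = cmid^2 := by rw [hc]; ring
          linarith [e1, e2]
        have key := bound_aux α β a b t u w hα hβ ht0 hu hw huw ht2 hcons
        have h1t : (0:ℝ) < 1 + t := by linarith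
        rw [h1, le_div_iff₀ h1t]
        have expand : ((0:ℝ)^2 - 1 + 2*a*b)*(1+t) = 2*(a*b)*(1+t) - 1 - t := by ring
        rw [expand]
        linarith [key]
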